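/- arXiv:2208.14587 — 8 statements merged into one kernel-verified Lean document; each statement's English description precedes it below -/
import Mathlib

section
/- For any real number r in [0,1] and any integer q ≥ 2, we have c_q^(q+r+1) > c_{q+1}^(q+r), where c_q := sqrt(⌊(q+2)²/4⌋). Equivalently, the sequence (c_q^{1/(q+r)})_{q ≥ 2} is strictly decreasing. -/
/-- Key integer inequality: `(n+3)^(2n+3) < (n+2)^(2n+5)`, by induction. -/
lemma aux_key (n : ℕ) : (n+3)^(2*n+3) < (n+2)^(2*n+5) := by
  induction n with
  | zero => norm_num
  | succ k ih =>
    have h1 : (k+2)*(k+4) < (k+3)^2 := by nlinarith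
    have h2 : ((k+2)*(k+4))^(2*k+5) < ((k+3)^2)^(2*k+5) :=
      Nat.pow_lt_pow_left h1 (by omega)
    have h3 : (k+3)^(2*k+3) * (k+4)^(2*k+5) < (k+3)^(2*k+3) * (k+3)^(2*k+7) := by
      calc (k+3)^(2*k+3) * (k+4)^(2*k+5)
          < (k+2)^(2*k+5) * (k+4)^(2*k+5) := by
            exact Nat.mul_lt_mul_of_lt_of_le ih le_rfl (by positivity)
        _ = ((k+2)*(k+4))^(2*k+5) := by rw [mul_pow]
        _ < ((k+3)^2)^(2*k+5) := h2
        _ = (k+3)^(2*k+3) * (k+3)^(2*k+7) := by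
            rw [← pow_mul, ← pow_add]; ring_nf
    have h4 := Nat.lt_of_mul_lt_mul_left h3
    convert h4 using 2 <;> omega

lemma aux_key2 (n : ℕ) : (n+3)^(2*n+2) < (n+2)^(2*n+4) := by
  have h : (n+3)^(2*n+2) * (n+2) < (n+2)^(2*n+4) * (n+2) := by
    calc (n+3)^(2*n+2) * (n+2) < (n+3)^(2*n+2) * (n+3) := by
          exact Nat.mul_lt_mul_of_le_of_lt le_rfl (by omega) (by positivity)
      _ = (n+3)^(2*n+3) := by rw [← pow_succ]
      _ < (n+2)^(2*n+5) := aux_key n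
      _ = (n+2)^(2*n+4) * (n+2) := by rw [← pow_succ]
  exact Nat.lt_of_mul_lt_mul_right h

lemma aux_main0 (q : ℕ) (hq : 2 ≤ q) : ((q+3)^2/4)^q < ((q+2)^2/4)^(q+1) := by
  rcases Nat.even_or_odd q with ⟨k, hk⟩ | ⟨k, hk⟩
  · obtain ⟨j, rfl⟩ : ∃ j, k = j + 1 := ⟨k - 1, by omega⟩
    subst hk
    have ha : (j+1+(j+1)+2)^2/4 = (j+2)^2 := by
      have : (j+1+(j+1)+2)^2 = 4*((j+2)^2) := by ring
      rw [this]; omega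
    have hb : (j+1+(j+1)+3)^2/4 = (j+2)*(j+3) := by
      have : (j+1+(j+1)+3)^2 = 4*((j+2)*(j+3))+1 := by ring
      rw [this]
      set m := (j+2)*(j+3); omega
    rw [ha, hb]
    have hq' : j+1+(j+1) = 2*j+2 := by omega
    rw [hq']
    calc ((j+2)*(j+3))^(2*j+2) = (j+2)^(2*j+2) * (j+3)^(2*j+2) := by rw [mul_pow]
      _ < (j+2)^(2*j+2) * (j+2)^(2*j+4) := by
          exact Nat.mul_lt_mul_of_le_of_lt le_rfl (aux_key2 j) (by positivity)
      _ = ((j+2)^2)^(2*j+2+1) := by rw [← pow_add, ← pow_mul]; ring_nf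
  · obtain ⟨j, rfl⟩ : ∃ j, k = j + 1 := ⟨k - 1, by omega⟩
    subst hk
    have ha : (2*(j+1)+1+2)^2/4 = (j+2)*(j+3) := by
      have : (2*(j+1)+1+2)^2 = 4*((j+2)*(j+3))+1 := by ring
      rw [this]; set m := (j+2)*(j+3); omega
    have hb : (2*(j+1)+1+3)^2/4 = (j+3)^2 := by
      have : (2*(j+1)+1+3)^2 = 4*((j+3)^2) := by ring
      rw [this]; omega
    rw [ha, hb]
    have hq' : 2*(j+1)+1 = 2*j+3 := by omega
    rw [hq']
    calc ((j+3)^2)^(2*j+3) = (j+3)^(2*j+2) * (j+3)^(2*j+4) := by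
          rw [← pow_add, ← pow_mul]; ring_nf
      _ < (j+2)^(2*j+4) * (j+3)^(2*j+4) := by
          exact Nat.mul_lt_mul_of_lt_of_le (aux_key2 j) le_rfl (by positivity)
      _ = ((j+2)*(j+3))^(2*j+3+1) := by rw [← mul_pow]

lemma aux_main1 (q : ℕ) (hq : 2 ≤ q) : ((q+3)^2/4)^(q+1) < ((q+2)^2/4)^(q+2) := by
  rcases Nat.even_or_odd q with ⟨k, hk⟩ | ⟨k, hk⟩
  · obtain ⟨j, rfl⟩ : ∃ j, k = j + 1 := ⟨k - 1, by omega⟩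
    subst hk
    have ha : (j+1+(j+1)+2)^2/4 = (j+2)^2 := by
      have : (j+1+(j+1)+2)^2 = 4*((j+2)^2) := by ring
      rw [this]; omega
    have hb : (j+1+(j+1)+3)^2/4 = (j+2)*(j+3) := by
      have : (j+1+(j+1)+3)^2 = 4*((j+2)*(j+3))+1 := by ring
      rw [this]
      set m := (j+2)*(j+3); omega
    rw [ha, hb]
    have hq' : j+1+(j+1) = 2*j+2 := by omega
    rw [hq']
    calc ((j+2)*(j+3))^(2*j+2+1) = (j+2)^(2*j+3) * (j+3)^(2*j+3) := by rw [mul_pow]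
      _ < (j+2)^(2*j+3) * (j+2)^(2*j+5) := by
          exact Nat.mul_lt_mul_of_le_of_lt le_rfl (aux_key j) (by positivity)
      _ = ((j+2)^2)^(2*j+2+2) := by rw [← pow_add, ← pow_mul]; ring_nf
  · obtain ⟨j, rfl⟩ : ∃ j, k = j + 1 := ⟨k - 1, by omega⟩
    subst hk
    have ha : (2*(j+1)+1+2)^2/4 = (j+2)*(j+3) := by
      have : (2*(j+1)+1+2)^2 = 4*((j+2)*(j+3))+1 := by ring
      rw [this]; set m := (j+2)*(j+3); omega
    have hb : (2*(j+1)+1+3)^2/4 = (j+3)^2 := by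
      have : (2*(j+1)+1+3)^2 = 4*((j+3)^2) := by ring
      rw [this]; omega
    rw [ha, hb]
    have hq' : 2*(j+1)+1 = 2*j+3 := by omega
    rw [hq']
    calc ((j+3)^2)^(2*j+3+1) = (j+3)^(2*j+3) * (j+3)^(2*j+5) := by
          rw [← pow_add, ← pow_mul]; ring_nf
      _ < (j+2)^(2*j+5) * (j+3)^(2*j+5) := by
          exact Nat.mul_lt_mul_of_lt_of_le (aux_key j) le_rfl (by positivity)
      _ = ((j+2)*(j+3))^(2*j+3+2) := by rw [← mul_pow]

/-- The constant `c_q := sqrt(⌊(q+2)²/4⌋)` (here `(q+2)^2 / 4` is natural-number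
floor division). -/
noncomputable def c (q : ℕ) : ℝ := Real.sqrt (((q + 2) ^ 2 / 4 : ℕ) : ℝ)

lemma aux_c_pos (q : ℕ) : 0 < c q := by
  apply Real.sqrt_pos.2
  have h4 : 2^2 ≤ (q+2)^2 := Nat.pow_le_pow_left (by omega) 2
  have : 1 ≤ (q+2)^2/4 := by omega
  exact_mod_cast by omega

lemma aux_part1 (r : ℝ) (hr0 : 0 ≤ r) (hr1 : r ≤ 1) (q : ℕ) (hq : 2 ≤ q) :
    c (q + 1) ^ ((q : ℝ) + r) < c q ^ ((q : ℝ) + r + 1) := by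
  set a : ℕ := (q+2)^2/4 with ha_def
  set b : ℕ := (q+3)^2/4 with hb_def
  have ha4 : 4 ≤ a := by
    have h16 : 16 ≤ (q+2)^2 := by nlinarith
    have : (q+2)^2/4 ≥ 16/4 := Nat.div_le_div_right h16
    simpa [ha_def] using this
  have hab : a ≤ b := Nat.div_le_div_right (Nat.pow_le_pow_left (by omega) 2)
  have haR : (1:ℝ) < (a:ℝ) := by exact_mod_cast by omega
  have hbR : (1:ℝ) < (b:ℝ) := by exact_mod_cast by omega
  have haP : (0:ℝ) < (a:ℝ) := by linarith
  have hbP : (0:ℝ) < (b:ℝ) := by linarith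
  have h0 : ((b:ℝ))^q < ((a:ℝ))^(q+1) := by exact_mod_cast aux_main0 q hq
  have h1 : ((b:ℝ))^(q+1) < ((a:ℝ))^(q+2) := by exact_mod_cast aux_main1 q hq
  have l0 : (q:ℝ) * Real.log b < ((q:ℝ)+1) * Real.log a := by
    have := Real.log_lt_log (pow_pos hbP q) h0
    rw [Real.log_pow, Real.log_pow] at this
    push_cast at this ⊢; linarith
  have l1 : ((q:ℝ)+1) * Real.log b < ((q:ℝ)+2) * Real.log a := by
    have := Real.log_lt_log (pow_pos hbP (q+1)) h1
    rw [Real.log_pow, Real.log_pow] at this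
    push_cast at this ⊢; linarith
  have llog : Real.log (a:ℝ) ≤ Real.log (b:ℝ) :=
    Real.log_le_log haP (by exact_mod_cast hab)
  have hca : c q = Real.sqrt (a:ℝ) := rfl
  have hcb : c (q+1) = Real.sqrt (b:ℝ) := by
    simp only [c, hb_def]
  have hsa : (0:ℝ) < Real.sqrt a := Real.sqrt_pos.2 haP
  have hsb : (0:ℝ) < Real.sqrt b := Real.sqrt_pos.2 hbP
  rw [hca, hcb, Real.rpow_def_of_pos hsb, Real.rpow_def_of_pos hsa]
  apply Real.exp_lt_exp.2
  rw [Real.log_sqrt haP.le, Real.log_sqrt hbP.le]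
  have hprod : 0 ≤ (1 - r) * (Real.log b - Real.log a) :=
    mul_nonneg (by linarith) (by linarith)
  nlinarith [l1, hprod]

lemma aux_step (r : ℝ) (hr0 : 0 ≤ r) (hr1 : r ≤ 1) (q : ℕ) (hq : 2 ≤ q) :
    c (q + 1) ^ (1 / (((q:ℝ) + 1) + r)) < c q ^ (1 / ((q : ℝ) + r)) := by
  set s : ℝ := (q : ℝ) + r with hs_def
  have hq2 : (2:ℝ) ≤ (q:ℝ) := by exact_mod_cast hq
  have hs : 0 < s := by rw [hs_def]; linarith
  have hs1 : 0 < s + 1 := by linarith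
  have hx : (0:ℝ) < c (q+1) := aux_c_pos _
  have hy : (0:ℝ) < c q := aux_c_pos _
  have h := aux_part1 r hr0 hr1 q hq
  have he : (0:ℝ) < 1 / (s * (s+1)) := by positivity
  have e1 : c (q+1) ^ (1 / (s + 1)) = (c (q+1) ^ s) ^ (1 / (s * (s+1))) := by
    rw [← Real.rpow_mul hx.le]
    congr 1
    field_simp
  have e2 : c q ^ (1 / s) = (c q ^ (s+1)) ^ (1 / (s * (s+1))) := by
    rw [← Real.rpow_mul hy.le]
    congr 1
    field_simp
  have hlt : (c (q+1) ^ s) ^ (1 / (s * (s+1))) < (c q ^ (s+1)) ^ (1 / (s * (s+1))) :=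
    Real.rpow_lt_rpow (Real.rpow_nonneg hx.le s) (by rw [hs_def]; exact h) he
  have hse : ((q:ℝ) + 1) + r = s + 1 := by rw [hs_def]; ring
  rw [hse, e1, e2]
  exact hlt

lemma aux_chain (r : ℝ) (hr0 : 0 ≤ r) (hr1 : r ≤ 1) (p : ℕ) (hp : 2 ≤ p) :
    ∀ n : ℕ, p < n → c n ^ (1 / ((n : ℝ) + r)) < c p ^ (1 / ((p : ℝ) + r)) := by
  intro n
  induction n with
  | zero => omega
  | succ k ih =>
    intro hpk
    have h2 : c (k+1) ^ (1 / (((k+1:ℕ):ℝ) + r)) < c k ^ (1 / ((k:ℝ) + r)) := by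
      have hk2 : 2 ≤ k := by omega
      have := aux_step r hr0 hr1 k hk2
      push_cast
      push_cast at this
      convert this using 3
    rcases Nat.lt_or_ge p k with hlt | hge
    · exact lt_trans h2 (ih hlt)
    · have hpk' : p = k := by omega
      subst hpk'
      exact h2

/-- For any real `r ∈ [0,1]` and any integer `q ≥ 2`, we have
`c q ^ (q + r + 1) > c (q+1) ^ (q + r)`; equivalently, the sequence
`(c q ^ (1/(q+r)))_{q ≥ 2}` is strictly decreasing. -/
theorem stmt0 (r : ℝ) (hr0 : 0 ≤ r) (hr1 : r ≤ 1) :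
    (∀ q : ℕ, 2 ≤ q → c (q + 1) ^ ((q : ℝ) + r) < c q ^ ((q : ℝ) + r + 1)) ∧
    StrictAntiOn (fun q : ℕ => c q ^ (1 / ((q : ℝ) + r))) (Set.Ici 2) := by
  refine ⟨fun q hq => aux_part1 r hr0 hr1 q hq, ?_⟩
  intro p hp q hq hpq
  exact aux_chain r hr0 hr1 p hp q hpq
end

section
/- Fix an integer q ≥ 3 and a real number r in [0,1]. The function F(t) = (c_q^t · c_{q-1}^{1-t})^{1/(q+t-r)} is strictly decreasing on the interval t ∈ [0,1], where c_q := sqrt(⌊(q+2)²/4⌋). -/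
lemma lemA (n : ℕ) (hn : 1 ≤ n) : ((n : ℝ) + 1) ^ n < 3 * (n : ℝ) ^ n := by
  have hn0 : (0 : ℝ) < n := by exact_mod_cast hn
  have h1 : (n : ℝ) + 1 ≤ n * Real.exp (1 / n) := by
    have h := Real.add_one_le_exp (1 / (n : ℝ))
    have : (n : ℝ) + 1 = n * (1 / n + 1) := by field_simp; ring
    rw [this]
    nlinarith [h]
  have h2 : ((n : ℝ) + 1) ^ n ≤ ((n : ℝ) * Real.exp (1 / n)) ^ n :=
    pow_le_pow_left₀ (by positivity) h1 n
  have h3 : ((n : ℝ) * Real.exp (1 / n)) ^ n = (n : ℝ) ^ n * Real.exp 1 := by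
    rw [mul_pow, ← Real.exp_nat_mul]
    congr 1
    field_simp
  have h4 : Real.exp 1 < 3 := by
    have := Real.exp_one_lt_d9
    linarith
  have h5 : (0 : ℝ) < (n : ℝ) ^ n := by positivity
  nlinarith [h2, h3]

lemma lemA' (n : ℕ) (hn : 1 ≤ n) : (n + 1) ^ n < 3 * n ^ n := by
  have h := lemA n hn
  exact_mod_cast h

lemma lemB (n : ℕ) (hn : 2 ≤ n) : (n + 1) ^ (2 * n - 1) < n ^ (2 * n + 1) := by
  rcases eq_or_lt_of_le hn with h | h
  · subst h
    norm_num
  · have hn3 : 3 ≤ n := h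
    have h9 : 9 ≤ n * (n + 1) := by nlinarith
    have hA : (n + 1) ^ (2 * n) < 9 * n ^ (2 * n) := by
      have h1 := lemA' n (by omega)
      have h2 : ((n + 1) ^ n) ^ 2 < (3 * n ^ n) ^ 2 :=
        Nat.pow_lt_pow_left h1 (by norm_num)
      calc (n + 1) ^ (2 * n) = ((n + 1) ^ n) ^ 2 := by
            rw [← pow_mul]; ring_nf
      _ < (3 * n ^ n) ^ 2 := h2
      _ = 9 * n ^ (2 * n) := by rw [mul_pow, ← pow_mul]; ring_nf
    have hmul : (n + 1) * (n + 1) ^ (2 * n - 1) < (n + 1) * n ^ (2 * n + 1) := by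
      have e1 : (n + 1) * (n + 1) ^ (2 * n - 1) = (n + 1) ^ (2 * n) := by
        rw [← pow_succ']
        congr 1
        omega
      have e2 : (n + 1) * n ^ (2 * n + 1) = (n * (n + 1)) * n ^ (2 * n) := by
        rw [pow_succ]
        ring
      rw [e1, e2]
      calc (n + 1) ^ (2 * n) < 9 * n ^ (2 * n) := hA
      _ ≤ (n * (n + 1)) * n ^ (2 * n) := Nat.mul_le_mul_right _ h9
    exact Nat.lt_of_mul_lt_mul_left hmul

lemma lemN (q : ℕ) (hq : 3 ≤ q) :
    ((q + 2) ^ 2 / 4) ^ q < ((q + 1) ^ 2 / 4) ^ (q + 1) := by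
  rcases Nat.even_or_odd q with ⟨m, hm⟩ | ⟨m, hm⟩
  · -- q = 2m, m ≥ 2
    have hm2 : 2 ≤ m := by omega
    have e1 : (q + 2) ^ 2 / 4 = (m + 1) ^ 2 := by
      have : (q + 2) ^ 2 = 4 * (m + 1) ^ 2 := by subst hm; ring
      rw [this, Nat.mul_div_cancel_left _ (by norm_num)]
    have e2 : (q + 1) ^ 2 / 4 = m * (m + 1) := by
      have : (q + 1) ^ 2 = 4 * (m * (m + 1)) + 1 := by subst hm; ring
      rw [this]
      omega
    rw [e1, e2]
    have hB := lemB m hm2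
    have hmul : (m + 1) ^ (2 * m - 1) * (m + 1) ^ (2 * m + 1)
        < m ^ (2 * m + 1) * (m + 1) ^ (2 * m + 1) :=
      (Nat.mul_lt_mul_right (by positivity)).mpr hB
    have e3 : (m + 1) ^ (2 * m - 1) * (m + 1) ^ (2 * m + 1) = ((m + 1) ^ 2) ^ q := by
      rw [← pow_add, ← pow_mul]
      congr 1
      omega
    have e4 : m ^ (2 * m + 1) * (m + 1) ^ (2 * m + 1) = (m * (m + 1)) ^ (q + 1) := by
      rw [← mul_pow]
      congr 1
      omega
    rw [e3, e4] at hmul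
    exact hmul
  · -- q = 2m + 1, m ≥ 1
    have hm1 : 1 ≤ m := by omega
    have e1 : (q + 2) ^ 2 / 4 = (m + 1) * (m + 2) := by
      have : (q + 2) ^ 2 = 4 * ((m + 1) * (m + 2)) + 1 := by subst hm; ring
      rw [this]
      omega
    have e2 : (q + 1) ^ 2 / 4 = (m + 1) ^ 2 := by
      have : (q + 1) ^ 2 = 4 * (m + 1) ^ 2 := by subst hm; ring
      rw [this, Nat.mul_div_cancel_left _ (by norm_num)]
    rw [e1, e2]
    have hB := lemB (m + 1) (by omega)
    have hB' : (m + 2) ^ (2 * m + 1) < (m + 1) ^ (2 * m + 3) := by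
      have e5 : 2 * (m + 1) - 1 = 2 * m + 1 := by omega
      have e6 : 2 * (m + 1) + 1 = 2 * m + 3 := by omega
      rwa [e5, e6] at hB
    have hmul : (m + 2) ^ (2 * m + 1) * (m + 1) ^ (2 * m + 1)
        < (m + 1) ^ (2 * m + 3) * (m + 1) ^ (2 * m + 1) :=
      (Nat.mul_lt_mul_right (by positivity)).mpr hB'
    have e3 : (m + 2) ^ (2 * m + 1) * (m + 1) ^ (2 * m + 1) = ((m + 1) * (m + 2)) ^ q := by
      rw [← mul_pow]
      rw [mul_comm (m + 2) (m + 1)]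
      congr 1
      omega
    have e4 : (m + 1) ^ (2 * m + 3) * (m + 1) ^ (2 * m + 1) = ((m + 1) ^ 2) ^ (q + 1) := by
      rw [← pow_add, ← pow_mul]
      congr 1
      omega
    rw [e3, e4] at hmul
    exact hmul

/-- Fix an integer `q ≥ 3` and a real `r ∈ [0,1]`. Then the function
`F(t) = (c_q^t · c_{q-1}^{1-t})^{1/(q+t-r)}` is strictly decreasing on `[0,1]`. -/
theorem stmt1 (q : ℕ) (hq : 3 ≤ q) (r : ℝ) (hr0 : 0 ≤ r) (hr1 : r ≤ 1) :
    StrictAntiOn (fun t : ℝ => (c q ^ t * c (q - 1) ^ (1 - t)) ^ (1 / ((q : ℝ) + t - r)))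
      (Set.Icc 0 1) := by
  have hq1 : q - 1 + 2 = q + 1 := by omega
  set A : ℕ := (q + 2) ^ 2 / 4 with hAdef
  set B : ℕ := (q + 1) ^ 2 / 4 with hBdef
  -- Nat facts
  have hB4 : 4 ≤ B := by
    have h16 : 16 ≤ (q + 1) ^ 2 := by nlinarith
    have h := Nat.div_le_div_right (c := 4) h16
    simpa using h
  have hBA : B < A := by
    have h2 : (q + 1) ^ 2 + 4 ≤ (q + 2) ^ 2 := by nlinarith
    calc B < B + 1 := Nat.lt_succ_self _
    _ = ((q + 1) ^ 2 + 4) / 4 := by rw [Nat.add_div_right _ (by norm_num)]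
    _ ≤ A := Nat.div_le_div_right h2
  have hA0 : 0 < A := by omega
  have hABkey : A ^ q < B ^ (q + 1) := lemN q hq
  -- real facts about logs
  have hcqA : c q = Real.sqrt (A : ℝ) := rfl
  have hcqB : c (q - 1) = Real.sqrt (B : ℝ) := by
    rw [c, hq1]
  set a := Real.log (c q) with hadef
  set b := Real.log (c (q - 1)) with hbdef
  have hBR : (1 : ℝ) < (B : ℝ) := by exact_mod_cast (by omega : 1 < B)
  have hAR : (0 : ℝ) < (A : ℝ) := by exact_mod_cast hA0
  have ha : a = Real.log (A : ℝ) / 2 := by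
    rw [hadef, hcqA, Real.log_sqrt (by positivity)]
  have hb : b = Real.log (B : ℝ) / 2 := by
    rw [hbdef, hcqB, Real.log_sqrt (by positivity)]
  have hb0 : 0 < b := by
    rw [hb]
    have := Real.log_pos hBR
    linarith
  have hab : b < a := by
    rw [ha, hb]
    have := Real.log_lt_log (by linarith) (show (B : ℝ) < (A : ℝ) by exact_mod_cast hBA)
    linarith
  have hkey : (q : ℝ) * a < ((q : ℝ) + 1) * b := by
    have h1 : ((A : ℝ)) ^ q < ((B : ℝ)) ^ (q + 1) := by exact_mod_cast hABkey
    have h2 : Real.log ((A : ℝ) ^ q) < Real.log ((B : ℝ) ^ (q + 1)) :=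
      Real.log_lt_log (by positivity) h1
    rw [Real.log_pow, Real.log_pow] at h2
    rw [ha, hb]
    push_cast at h2 ⊢
    linarith
  have hcq0 : 0 < c q := by
    rw [hcqA]
    positivity
  have hcq10 : 0 < c (q - 1) := by
    rw [hcqB]
    positivity
  have hq3 : (3 : ℝ) ≤ (q : ℝ) := by exact_mod_cast hq
  -- rewrite the function as an exponential
  have hf : ∀ t : ℝ, (c q ^ t * c (q - 1) ^ (1 - t)) ^ (1 / ((q : ℝ) + t - r)) =
      Real.exp ((a * t + b * (1 - t)) * (1 / ((q : ℝ) + t - r))) := by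
    intro t
    rw [Real.rpow_def_of_pos hcq0, Real.rpow_def_of_pos hcq10, ← Real.exp_add,
      Real.rpow_def_of_pos (Real.exp_pos _), Real.log_exp]
  intro x hx y hy hxy
  simp only [Set.mem_Icc] at hx hy
  simp only [hf]
  rw [Real.exp_lt_exp]
  have hdx : 0 < (q : ℝ) + x - r := by linarith [hx.1]
  have hdy : 0 < (q : ℝ) + y - r := by linarith [hy.1]
  rw [mul_one_div, mul_one_div, div_lt_div_iff₀ hdy hdx]
  have hpos : 0 < b - ((q : ℝ) - r) * (a - b) := by
    nlinarith [mul_nonneg hr0 (by linarith : (0 : ℝ) ≤ a - b)]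
  nlinarith [mul_pos (sub_pos.mpr hxy) hpos]
end

section
/- The number of numerical semigroups with Frobenius number f and depth exactly q is at most f · q^{f/(q-1)}. -/
/-- A numerical semigroup: a cofinite additive submonoid of ℕ containing 0. -/
def IsNumericalSemigroup (S : Set ℕ) : Prop :=
  0 ∈ S ∧ (∀ a ∈ S, ∀ b ∈ S, a + b ∈ S) ∧ Sᶜ.Finite

/-- The multiplicity: the least positive element. -/
noncomputable def sgMultiplicity (S : Set ℕ) : ℕ := sInf {n | n ∈ S ∧ 0 < n}

/-- The Frobenius number: the largest integer not in `S`. -/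
noncomputable def sgFrobenius (S : Set ℕ) : ℕ := sSup Sᶜ

/-- The depth `⌈(f+1)/m⌉`, computed as `(f + m) / m` in ℕ. -/
noncomputable def sgDepth (S : Set ℕ) : ℕ :=
  (sgFrobenius S + sgMultiplicity S) / sgMultiplicity S

namespace NSProof

variable {S : Set ℕ}

lemma mem_of_gt (H : IsNumericalSemigroup S) {n : ℕ} (h : sgFrobenius S < n) : n ∈ S := by
  by_contra hn
  exact absurd (le_csSup (Set.Finite.bddAbove H.2.2) hn) (not_le.mpr h)

lemma mult_spec (H : IsNumericalSemigroup S) :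
    sgMultiplicity S ∈ S ∧ 0 < sgMultiplicity S := by
  have h : sgFrobenius S + 1 ∈ {n | n ∈ S ∧ 0 < n} :=
    ⟨mem_of_gt H (by omega), by omega⟩
  exact Nat.sInf_mem ⟨_, h⟩

lemma mult_le (H : IsNumericalSemigroup S) : sgMultiplicity S ≤ sgFrobenius S + 1 :=
  Nat.sInf_le ⟨mem_of_gt H (by omega), by omega⟩

lemma mult_min (H : IsNumericalSemigroup S) {n : ℕ} (hn : n ∈ S) (h0 : 0 < n) :
    sgMultiplicity S ≤ n := Nat.sInf_le ⟨hn, h0⟩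

lemma mul_mem (H : IsNumericalSemigroup S) (t : ℕ) : t * sgMultiplicity S ∈ S := by
  induction t with
  | zero => simpa using H.1
  | succ t ih =>
    have := H.2.1 _ ih _ (mult_spec H).1
    simpa [Nat.succ_mul] using this

/-- Apéry function: least element of `S` with residue `i` mod the multiplicity. -/
noncomputable def ap (S : Set ℕ) (i : ℕ) : ℕ :=
  sInf {n | n ∈ S ∧ n % sgMultiplicity S = i}

lemma ap_spec (H : IsNumericalSemigroup S) {i : ℕ} (hi : i < sgMultiplicity S) :
    ap S i ∈ S ∧ ap S i % sgMultiplicity S = i := by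
  have hm : 0 < sgMultiplicity S := (mult_spec H).2
  have hw : i + (sgFrobenius S + 1) * sgMultiplicity S ∈
      {n | n ∈ S ∧ n % sgMultiplicity S = i} := by
    constructor
    · exact mem_of_gt H (by nlinarith)
    · simpa [Nat.add_mul_mod_self_right] using Nat.mod_eq_of_lt hi
  exact Nat.sInf_mem ⟨_, hw⟩

lemma ap_le (H : IsNumericalSemigroup S) {i : ℕ} (hi : i < sgMultiplicity S) :
    ap S i ≤ sgFrobenius S + sgMultiplicity S := by
  have hm : 0 < sgMultiplicity S := (mult_spec H).2
  set m := sgMultiplicity S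
  set F := sgFrobenius S
  have hif : i ≤ F := by have := mult_le H; omega
  set d := (F - i) / m with hd
  have hdm : m * d + (F - i) % m = F - i := Nat.div_add_mod _ _
  have hr : (F - i) % m < m := Nat.mod_lt _ hm
  have key : i + (d + 1) * m = i + m * d + m := by ring
  have hmem : i + (d + 1) * m ∈ S := by
    apply mem_of_gt H
    omega
  have hmod : (i + (d + 1) * m) % m = i := by
    simpa [Nat.add_mul_mod_self_right] using Nat.mod_eq_of_lt hi
  have := Nat.sInf_le (s := {n | n ∈ S ∧ n % m = i}) ⟨hmem, hmod⟩
  calc ap S i ≤ i + (d + 1) * m := this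
    _ ≤ F + m := by omega

lemma mem_iff (H : IsNumericalSemigroup S) (n : ℕ) :
    n ∈ S ↔ ap S (n % sgMultiplicity S) ≤ n := by
  have hm : 0 < sgMultiplicity S := (mult_spec H).2
  set m := sgMultiplicity S
  constructor
  · intro hn
    exact Nat.sInf_le ⟨hn, rfl⟩
  · intro hle
    obtain ⟨hwS, hwmod⟩ := ap_spec H (Nat.mod_lt n hm)
    set w := ap S (n % m)
    have hmodeq : w ≡ n [MOD m] := hwmod
    obtain ⟨t, ht⟩ := (Nat.modEq_iff_dvd' hle).mp hmodeq
    have hsum : w + m * t ∈ S := H.2.1 w hwS (m * t) (by simpa [mul_comm] using mul_mem H t)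
    have : w + m * t = n := by omega
    rwa [this] at hsum

lemma ap_zero (H : IsNumericalSemigroup S) : ap S 0 = 0 :=
  Nat.le_zero.mp (Nat.sInf_le ⟨H.1, Nat.zero_mod _⟩)

lemma ext_of_ap {T : Set ℕ} (H : IsNumericalSemigroup S) (H' : IsNumericalSemigroup T)
    (hm : sgMultiplicity S = sgMultiplicity T)
    (hap : ∀ r < sgMultiplicity S, ap S r = ap T r) : S = T := by
  ext n
  rw [mem_iff H n, mem_iff H' n, ← hm, hap _ (Nat.mod_lt n (mult_spec H).2)]

lemma main_facts (H : IsNumericalSemigroup S) {f q : ℕ} (hq : 2 ≤ q)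
    (hF : sgFrobenius S = f) (hD : sgDepth S = q) :
    1 ≤ sgMultiplicity S ∧ sgMultiplicity S * (q - 1) ≤ f ∧
      ∀ r, 1 ≤ r → r < sgMultiplicity S →
        1 ≤ ap S r / sgMultiplicity S ∧ ap S r / sgMultiplicity S ≤ q := by
  have hm : 0 < sgMultiplicity S := (mult_spec H).2
  set m := sgMultiplicity S
  have h1 := Nat.div_add_mod (f + m) m
  have h2 := Nat.mod_lt (f + m) hm
  have hDq : (f + m) / m = q := by
    have : sgDepth S = (f + m) / m := by rw [sgDepth, hF]
    omega
  rw [hDq] at h1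
  obtain ⟨q', rfl⟩ : ∃ q', q = q' + 1 := ⟨q - 1, by omega⟩
  have hmq : m * (q' + 1) = m * q' + m := by ring
  refine ⟨hm, ?_, fun r hr1 hrm => ?_⟩
  · have hs : q' + 1 - 1 = q' := by omega
    rw [hs]; omega
  obtain ⟨hapS, hapmod⟩ := ap_spec H hrm
  have haple : ap S r ≤ f + m := by have := ap_le H hrm; omega
  have hpos : 0 < ap S r := by
    rcases Nat.eq_zero_or_pos (ap S r) with h | h
    · rw [h] at hapmod; simp at hapmod; omega
    · exact h
  have hge : m ≤ ap S r := mult_min H hapS hpos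
  constructor
  · rwa [Nat.one_le_div_iff hm]
  · have : ap S r / m < q' + 1 + 1 := by
      rw [Nat.div_lt_iff_lt_mul hm]
      have : (q' + 1 + 1) * m = m * q' + m + m := by ring
      omega
    omega

end NSProof

open NSProof

/-- The number of numerical semigroups with Frobenius number `f` and depth exactly
`q` is at most `f · q^{f/(q-1)}`. -/
theorem stmt5 (f q : ℕ) (hq : 2 ≤ q) (hf : 1 ≤ f) :
    (Nat.card {S : Set ℕ // IsNumericalSemigroup S ∧ sgFrobenius S = f ∧ sgDepth S = q} : ℝ)
      ≤ (f : ℝ) * (q : ℝ) ^ ((f : ℝ) / ((q : ℝ) - 1)) := by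
  set M := f / (q - 1) with hMdef
  -- the injection
  have hq1 : 0 < q - 1 := by omega
  set A := {S : Set ℕ // IsNumericalSemigroup S ∧ sgFrobenius S = f ∧ sgDepth S = q}
  have hmem_Icc : ∀ x : A, sgMultiplicity x.1 ∈ Finset.Icc 1 M := by
    rintro ⟨S, H, hF, hD⟩
    obtain ⟨h1, h2, _⟩ := main_facts H hq hF hD
    simp only [Finset.mem_Icc]
    exact ⟨h1, (Nat.le_div_iff_mul_le hq1).mpr h2⟩
  have hval_lt : ∀ (x : A) (i : Fin M),
      (if (i : ℕ) + 1 < sgMultiplicity x.1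
        then ap x.1 ((i : ℕ) + 1) / sgMultiplicity x.1 - 1 else 0) < q := by
    rintro ⟨S, H, hF, hD⟩ i
    dsimp only
    obtain ⟨h1, h2, h3⟩ := main_facts H hq hF hD
    split
    · next h => obtain ⟨hk1, hk2⟩ := h3 _ (by omega) h; omega
    · omega
  set Φ : A → {x // x ∈ Finset.Icc 1 M} × (Fin M → Fin q) :=
    fun x => (⟨sgMultiplicity x.1, hmem_Icc x⟩,
      fun i => ⟨_, hval_lt x i⟩) with hΦ
  have hinj : Function.Injective Φ := by
    rintro ⟨S, H, hFS, hDS⟩ ⟨T, H', hFT, hDT⟩ heq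
    simp only [hΦ, Prod.mk.injEq, Subtype.mk.injEq] at heq
    obtain ⟨hm, hfun⟩ := heq
    obtain ⟨hm1S, hm2S, h3S⟩ := main_facts H hq hFS hDS
    obtain ⟨hm1T, hm2T, h3T⟩ := main_facts H' hq hFT hDT
    have hmM : sgMultiplicity S ≤ M := (Nat.le_div_iff_mul_le hq1).mpr hm2S
    refine Subtype.ext (ext_of_ap H H' hm ?_)
    intro r hrm
    replace hrm : r < sgMultiplicity S := hrm
    show ap S r = ap T r
    rcases Nat.eq_zero_or_pos r with rfl | hr1
    · rw [ap_zero H, ap_zero H']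
    · have hiM : r - 1 < M := by omega
      have := congrFun hfun ⟨r - 1, hiM⟩
      simp only [Fin.mk.injEq] at this
      have hr' : r - 1 + 1 = r := by omega
      rw [hr'] at this
      rw [if_pos hrm, if_pos (hm ▸ hrm)] at this
      obtain ⟨hkS1, _⟩ := h3S r hr1 hrm
      obtain ⟨hkT1, _⟩ := h3T r hr1 (hm ▸ hrm)
      have hdiv : ap S r / sgMultiplicity S = ap T r / sgMultiplicity T := by omega
      have e1 := Nat.div_add_mod (ap S r) (sgMultiplicity S)
      have e2 := Nat.div_add_mod (ap T r) (sgMultiplicity T)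
      rw [(ap_spec H hrm).2] at e1
      rw [(ap_spec H' (hm ▸ hrm)).2] at e2
      rw [hdiv, hm] at e1
      omega
  -- count the target
  have hcard : Nat.card A ≤ M * q ^ M := by
    have h := Nat.card_le_card_of_injective Φ hinj
    have h2 : Nat.card ({x // x ∈ Finset.Icc 1 M} × (Fin M → Fin q)) = M * q ^ M := by
      rw [Nat.card_prod, Nat.card_fun, Nat.card_eq_finsetCard, Nat.card_Icc,
        Nat.add_sub_cancel, Nat.card_eq_fintype_card, Nat.card_eq_fintype_card,
        Fintype.card_fin, Fintype.card_fin]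
    rwa [h2] at h
  -- pass to the reals
  have hMf : (M : ℝ) ≤ f := by exact_mod_cast Nat.div_le_self f (q - 1)
  have hMle : (M : ℝ) ≤ (f : ℝ) / ((q : ℝ) - 1) := by
    have h := Nat.cast_div_le (α := ℝ) (m := f) (n := q - 1)
    have : ((q - 1 : ℕ) : ℝ) = (q : ℝ) - 1 := by
      push_cast [Nat.cast_sub (by omega : 1 ≤ q)]; ring
    rwa [this] at h
  have hq1R : (1 : ℝ) ≤ (q : ℝ) := by exact_mod_cast Nat.one_le_of_lt hq
  have hpow : ((q : ℝ)) ^ (M : ℕ) ≤ (q : ℝ) ^ ((f : ℝ) / ((q : ℝ) - 1)) := by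
    rw [← Real.rpow_natCast]
    exact Real.rpow_le_rpow_of_exponent_le hq1R hMle
  calc (Nat.card A : ℝ) ≤ ((M * q ^ M : ℕ) : ℝ) := by exact_mod_cast hcard
    _ = (M : ℝ) * (q : ℝ) ^ (M : ℕ) := by push_cast; ring
    _ ≤ (f : ℝ) * (q : ℝ) ^ ((f : ℝ) / ((q : ℝ) - 1)) := by
        apply mul_le_mul hMf hpow (by positivity) (by positivity)
end

section
/- For integers f and ℓ with (f-1)/2 ≤ ℓ ≤ f-2, the number of numerical semigroups with Frobenius number f, multiplicity ℓ+1, and depth exactly 2 equals 2^{f-2-ℓ}. For ℓ outside this range, there are no such semigroups. -/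
/-!
Every numerical semigroup `S` with multiplicity `m` and Frobenius number `f` is
`{0, m} ∪ T ∪ (f, ∞)` for its middle part `T = S ∩ (m, f)`. When the depth is `2`, i.e.
`m < f < 2m`, any two positive elements sum to at least `2m > f`, so closure under addition
is automatic and *every* `T ⊆ (m, f)` occurs. Hence these semigroups are in bijection with
the subsets of the `f - m - 1` integers strictly between `m` and `f`.
-/

lemma Nat.add_div_self_eq_two_iff {f m : ℕ} (hm : 0 < m) :
    (f + m) / m = 2 ↔ m ≤ f ∧ f < 2 * m := by
  rw [Nat.add_div_right _ hm, show 2 = 1 + 1 from rfl, Nat.add_right_cancel_iff,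
    Nat.div_eq_iff hm]
  omega

lemma Nat.card_powerset_Ioo (a b : ℕ) : Nat.card (𝒫 Set.Ioo a b) = 2 ^ (b - a - 1) := by
  rw [Nat.card_congr (Equiv.Set.powerset _), Nat.card_eq_fintype_card, Fintype.card_set,
    Fintype.card_Ioo, Nat.card_Ioo]

section Basic

variable {S : Set ℕ}

lemma mem_of_sgFrobenius_lt (hfin : Sᶜ.Finite) {n : ℕ} (hn : sgFrobenius S < n) : n ∈ S := by
  by_contra h
  exact hn.not_ge (le_csSup hfin.bddAbove h)

lemma sgFrobenius_notMem (hfin : Sᶜ.Finite) (hf : sgFrobenius S ≠ 0) : sgFrobenius S ∉ S := by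
  have hne : Sᶜ.Nonempty := by
    by_contra h
    rw [Set.not_nonempty_iff_eq_empty] at h
    exact hf (by rw [sgFrobenius, h, csSup_empty, bot_eq_zero])
  exact hne.csSup_mem hfin

lemma sgMultiplicity_mem_and_pos (hfin : Sᶜ.Finite) :
    sgMultiplicity S ∈ S ∧ 0 < sgMultiplicity S :=
  Nat.sInf_mem (s := {n | n ∈ S ∧ 0 < n})
    ⟨_, mem_of_sgFrobenius_lt hfin (Nat.lt_succ_self _), Nat.succ_pos _⟩

lemma notMem_of_lt_sgMultiplicity {n : ℕ} (hn : 0 < n) (h : n < sgMultiplicity S) : n ∉ S :=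
  fun hnS => h.not_ge (Nat.sInf_le ⟨hnS, hn⟩)

end Basic

def sgOfMiddle (m f : ℕ) (T : Set ℕ) : Set ℕ := {0, m} ∪ T ∪ Set.Ioi f

lemma mem_sgOfMiddle {m f : ℕ} {T : Set ℕ} {n : ℕ} :
    n ∈ sgOfMiddle m f T ↔ n = 0 ∨ n = m ∨ n ∈ T ∨ f < n := by
  simp only [sgOfMiddle, Set.mem_union, Set.mem_insert_iff, Set.mem_singleton_iff, Set.mem_Ioi,
    or_assoc]

namespace IsNumericalSemigroup

variable {S : Set ℕ}

theorem eq_sgOfMiddle (hS : IsNumericalSemigroup S) :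
    S = sgOfMiddle (sgMultiplicity S) (sgFrobenius S)
      (S ∩ Set.Ioo (sgMultiplicity S) (sgFrobenius S)) := by
  obtain ⟨h0, -, hfin⟩ := hS
  obtain ⟨hm, -⟩ := sgMultiplicity_mem_and_pos hfin
  ext n
  rw [mem_sgOfMiddle, Set.mem_inter_iff, Set.mem_Ioo]
  constructor
  · intro hn
    rcases Nat.eq_zero_or_pos n with rfl | hpos
    · exact Or.inl rfl
    have hmn : sgMultiplicity S ≤ n := not_lt.1 fun h => notMem_of_lt_sgMultiplicity hpos h hn
    have hfn : n ≠ sgFrobenius S := fun h => sgFrobenius_notMem hfin (by omega) (h ▸ hn)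
    rcases hmn.eq_or_lt with hmn | hmn
    · exact Or.inr (Or.inl hmn.symm)
    rcases hfn.lt_or_gt with hfn | hfn
    · exact Or.inr (Or.inr (Or.inl ⟨hn, hmn, hfn⟩))
    · exact Or.inr (Or.inr (Or.inr hfn))
  · rintro (rfl | rfl | ⟨hn, -⟩ | hn)
    exacts [h0, hm, hn, mem_of_sgFrobenius_lt hfin hn]

theorem sgMultiplicity_lt_sgFrobenius_lt_two_mul (hS : IsNumericalSemigroup S)
    (hd : sgDepth S = 2) :
    sgMultiplicity S < sgFrobenius S ∧ sgFrobenius S < 2 * sgMultiplicity S := by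
  obtain ⟨hm, hpos⟩ := sgMultiplicity_mem_and_pos hS.2.2
  obtain ⟨hle, hlt⟩ := (Nat.add_div_self_eq_two_iff hpos).1 hd
  have hf : sgFrobenius S ∉ S := sgFrobenius_notMem hS.2.2 (by omega)
  exact ⟨lt_of_le_of_ne hle fun h => hf (h ▸ hm), hlt⟩

end IsNumericalSemigroup

section OfMiddle

variable {m f : ℕ} {T : Set ℕ}

lemma sgOfMiddle_inter_Ioo (hT : T ⊆ Set.Ioo m f) : sgOfMiddle m f T ∩ Set.Ioo m f = T := by
  ext n
  rw [Set.mem_inter_iff, mem_sgOfMiddle, Set.mem_Ioo]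
  constructor
  · rintro ⟨h | h | h | h, hmn, hnf⟩
    all_goals first | exact h | omega
  · exact fun hn => ⟨Or.inr (Or.inr (Or.inl hn)), hT hn⟩

lemma le_of_mem_sgOfMiddle (hmf : m ≤ f) (hT : T ⊆ Set.Ioo m f) {n : ℕ}
    (hn : n ∈ sgOfMiddle m f T) (hpos : 0 < n) : m ≤ n := by
  rcases mem_sgOfMiddle.1 hn with h | h | h | h
  · omega
  · omega
  · exact (hT h).1.le
  · omega

lemma isNumericalSemigroup_sgOfMiddle (hmf : m ≤ f) (hf : f < 2 * m) (hT : T ⊆ Set.Ioo m f) :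
    IsNumericalSemigroup (sgOfMiddle m f T) := by
  refine ⟨mem_sgOfMiddle.2 (Or.inl rfl), fun a ha b hb => ?_, ?_⟩
  · rcases Nat.eq_zero_or_pos a with rfl | ha0
    · rwa [zero_add]
    rcases Nat.eq_zero_or_pos b with rfl | hb0
    · rwa [add_zero]
    have := le_of_mem_sgOfMiddle hmf hT ha ha0
    have := le_of_mem_sgOfMiddle hmf hT hb hb0
    exact mem_sgOfMiddle.2 (Or.inr (Or.inr (Or.inr (by omega))))
  · refine (Set.finite_Iic f).subset fun n hn => ?_
    by_contra h
    exact hn (mem_sgOfMiddle.2 (Or.inr (Or.inr (Or.inr (not_le.1 h)))))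

lemma sgFrobenius_sgOfMiddle (hmf : m < f) (hT : T ⊆ Set.Ioo m f) :
    sgFrobenius (sgOfMiddle m f T) = f := by
  refine IsGreatest.csSup_eq ⟨fun h => ?_, fun n hn => ?_⟩
  · rcases mem_sgOfMiddle.1 h with h | h | h | h
    · omega
    · omega
    · exact (hT h).2.false
    · exact h.false
  · by_contra h
    exact hn (mem_sgOfMiddle.2 (Or.inr (Or.inr (Or.inr (not_le.1 h)))))

lemma sgMultiplicity_sgOfMiddle (hm : 0 < m) (hmf : m ≤ f) (hT : T ⊆ Set.Ioo m f) :
    sgMultiplicity (sgOfMiddle m f T) = m :=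
  IsLeast.csInf_eq ⟨⟨mem_sgOfMiddle.2 (Or.inr (Or.inl rfl)), hm⟩,
    fun _ hn => le_of_mem_sgOfMiddle hmf hT hn.1 hn.2⟩

lemma isDepthTwo_sgOfMiddle (hmf : m < f) (hf : f < 2 * m) (hT : T ⊆ Set.Ioo m f) :
    IsNumericalSemigroup (sgOfMiddle m f T) ∧ sgFrobenius (sgOfMiddle m f T) = f ∧
      sgMultiplicity (sgOfMiddle m f T) = m ∧ sgDepth (sgOfMiddle m f T) = 2 := by
  have hfrob := sgFrobenius_sgOfMiddle hmf hT
  have hmult := sgMultiplicity_sgOfMiddle (by omega) hmf.le hT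
  refine ⟨isNumericalSemigroup_sgOfMiddle hmf.le hf hT, hfrob, hmult, ?_⟩
  rw [sgDepth, hfrob, hmult, Nat.add_div_self_eq_two_iff (by omega)]
  exact ⟨hmf.le, hf⟩

end OfMiddle

noncomputable def depthTwoEquivPowerset {m f : ℕ} (hmf : m < f) (hf : f < 2 * m) :
    {S : Set ℕ // IsNumericalSemigroup S ∧ sgFrobenius S = f ∧ sgMultiplicity S = m ∧
      sgDepth S = 2} ≃ 𝒫 Set.Ioo m f where
  toFun S := ⟨S.1 ∩ Set.Ioo m f, Set.inter_subset_right⟩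
  invFun T := ⟨sgOfMiddle m f T, isDepthTwo_sgOfMiddle hmf hf T.2⟩
  left_inv := by
    rintro ⟨S, hS, rfl, rfl, -⟩
    exact Subtype.ext hS.eq_sgOfMiddle.symm
  right_inv T := Subtype.ext (sgOfMiddle_inter_Ioo T.2)

/-- For `(f-1)/2 ≤ ℓ ≤ f-2`, the number of numerical semigroups with Frobenius
number `f`, multiplicity `ℓ+1` and depth exactly `2` equals `2^{f-2-ℓ}`; for `ℓ`
outside this range there are no such semigroups. -/
theorem stmt7 (f ℓ : ℕ) :
    (f ≤ 2 * ℓ + 1 → ℓ + 2 ≤ f →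
      Nat.card {S : Set ℕ // IsNumericalSemigroup S ∧ sgFrobenius S = f ∧
        sgMultiplicity S = ℓ + 1 ∧ sgDepth S = 2} = 2 ^ (f - 2 - ℓ)) ∧
    (¬(f ≤ 2 * ℓ + 1 ∧ ℓ + 2 ≤ f) →
      Nat.card {S : Set ℕ // IsNumericalSemigroup S ∧ sgFrobenius S = f ∧
        sgMultiplicity S = ℓ + 1 ∧ sgDepth S = 2} = 0) := by
  refine ⟨fun h1 h2 => ?_, fun h => ?_⟩
  · rw [Nat.card_congr (depthTwoEquivPowerset (by omega : ℓ + 1 < f) (by omega)),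
      Nat.card_powerset_Ioo]
    congr 1
    omega
  · refine Nat.card_eq_zero.2 (Or.inl ⟨fun ⟨S, hS, hf, hm, hd⟩ => h ?_⟩)
    have := hS.sgMultiplicity_lt_sgFrobenius_lt_two_mul hd
    omega
end

section
/- Let w_1⋯w_ℓ be a Kunz word (i.e., satisfying w_i + w_j ≥ w_{i+j} for i+j ≤ ℓ and w_i + w_j + 1 ≥ w_{i+j-ℓ-1} for i+j > ℓ+1) with all entries in [1,q]. Define v_i := min{q-1, w_i}. Then v_1⋯v_ℓ is also a Kunz word. -/
/-- A word `w₁ ⋯ w_ℓ` of positive integers (encoded as `w : ℕ → ℕ`, with entries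
indexed by `1, …, ℓ`) is a Kunz word if `w i + w j ≥ w (i+j)` whenever `i + j ≤ ℓ`,
and `w i + w j + 1 ≥ w (i + j - ℓ - 1)` whenever `i + j > ℓ + 1`. -/
def IsKunzWord (ℓ : ℕ) (w : ℕ → ℕ) : Prop :=
  (∀ i, 1 ≤ i → i ≤ ℓ → 1 ≤ w i) ∧
  (∀ i j, 1 ≤ i → 1 ≤ j → i + j ≤ ℓ → w (i + j) ≤ w i + w j) ∧
  (∀ i j, 1 ≤ i → 1 ≤ j → i ≤ ℓ → j ≤ ℓ → ℓ + 1 < i + j → w (i + j - ℓ - 1) ≤ w i + w j + 1)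

/-- If `w₁ ⋯ w_ℓ` is a Kunz word with all entries in `[1, q]` and `v i := min (q-1) (w i)`,
then `v₁ ⋯ v_ℓ` is also a Kunz word. -/
theorem stmt8 (ℓ q : ℕ) (hq : 2 ≤ q) (w : ℕ → ℕ) (hw : IsKunzWord ℓ w)
    (hwq : ∀ i, 1 ≤ i → i ≤ ℓ → w i ≤ q) :
    IsKunzWord ℓ (fun i => min (q - 1) (w i)) := by
  obtain ⟨h1, h2, h3⟩ := hw
  refine ⟨?_, ?_, ?_⟩
  · intro i hi hiℓ
    have := h1 i hi hiℓ
    simp only [le_min_iff]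
    omega
  · intro i j hi hj hij
    have hwi := h1 i hi (by omega)
    have hwj := h1 j hj (by omega)
    have := h2 i j hi hj hij
    simp only
    rcases min_cases (q - 1) (w i) with ⟨e1, _⟩ | ⟨e1, _⟩ <;>
      rcases min_cases (q - 1) (w j) with ⟨e2, _⟩ | ⟨e2, _⟩ <;>
      rw [e1, e2] <;> omega
  · intro i j hi hj hiℓ hjℓ hij
    have hwi := h1 i hi hiℓ
    have hwj := h1 j hj hjℓ
    have := h3 i j hi hj hiℓ hjℓ hij
    simp only
    rcases min_cases (q - 1) (w i) with ⟨e1, _⟩ | ⟨e1, _⟩ <;>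
      rcases min_cases (q - 1) (w j) with ⟨e2, _⟩ | ⟨e2, _⟩ <;>
      rw [e1, e2] <;> omega
end

section
/- Fix q ≥ 3, integers ℓ ≥ 1 and 1 ≤ j ≤ ℓ. Consider the set of words w_1⋯w_ℓ such that w_j = q, w_i ∈ [⌊(q+1)/2⌋, q] for i ≤ j/2, w_i ∈ [⌊q/2⌋, q] for j/2 < i < j, w_i ∈ [⌊q/2⌋, q-1] for j < i ≤ (ℓ+j+1)/2, and w_i ∈ [⌊(q-1)/2⌋, q-1] for i > (ℓ+j+1)/2. Then every word in this set is a Kunz word (i.e., satisfies w_x + w_y ≥ w_{x+y} for x+y ≤ ℓ and w_x + w_y + 1 ≥ w_{x+y-ℓ-1} for x+y > ℓ+1) with maximum entry q and largest index attaining q equal to j. -/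
/-- Fix `q ≥ 3`, `ℓ ≥ 1` and `1 ≤ j ≤ ℓ`. Any word `w₁ ⋯ w_ℓ` with `w j = q`,
`w i ∈ [⌊(q+1)/2⌋, q]` for `i ≤ j/2`, `w i ∈ [⌊q/2⌋, q]` for `j/2 < i < j`,
`w i ∈ [⌊q/2⌋, q-1]` for `j < i ≤ (ℓ+j+1)/2`, and `w i ∈ [⌊(q-1)/2⌋, q-1]` for
`i > (ℓ+j+1)/2`, is a Kunz word with maximum entry `q`, and the largest index
attaining `q` is `j`. -/
theorem stmt12 (q ℓ j : ℕ) (hq : 3 ≤ q) (hℓ : 1 ≤ ℓ) (hj1 : 1 ≤ j) (hj2 : j ≤ ℓ)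
    (w : ℕ → ℕ)
    (hwj : w j = q)
    (h1 : ∀ i, 1 ≤ i → 2 * i ≤ j → ((q + 1) / 2 ≤ w i ∧ w i ≤ q))
    (h2 : ∀ i, j < 2 * i → i < j → (q / 2 ≤ w i ∧ w i ≤ q))
    (h3 : ∀ i, j < i → 2 * i ≤ ℓ + j + 1 → (q / 2 ≤ w i ∧ w i ≤ q - 1))
    (h4 : ∀ i, ℓ + j + 1 < 2 * i → i ≤ ℓ → ((q - 1) / 2 ≤ w i ∧ w i ≤ q - 1)) :
    IsKunzWord ℓ w ∧ (∀ i, 1 ≤ i → i ≤ ℓ → w i ≤ q) ∧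
      (∀ i, 1 ≤ i → i ≤ ℓ → w i = q → i ≤ j) := by
    -- basic bounds
  have lb : ∀ i, 1 ≤ i → i ≤ ℓ → (q - 1) / 2 ≤ w i := by
    intro i hi1 hi2
    rcases lt_trichotomy i j with h | h | h
    · by_cases hc : 2 * i ≤ j
      · have := h1 i hi1 hc; omega
      · have := h2 i (by omega) h; omega
    · subst h; omega
    · by_cases hc : 2 * i ≤ ℓ + j + 1
      · have := h3 i h hc; omega
      · have := h4 i (by omega) hi2; omega
  have lb2 : ∀ i, 1 ≤ i → 2 * i ≤ ℓ + j + 1 → i ≤ ℓ → q / 2 ≤ w i := by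
    intro i hi1 hc hi2
    rcases lt_trichotomy i j with h | h | h
    · by_cases hc' : 2 * i ≤ j
      · have := h1 i hi1 hc'; omega
      · have := h2 i (by omega) h; omega
    · subst h; omega
    · have := h3 i h hc; omega
  have lbj : ∀ i, 1 ≤ i → i ≤ j → q / 2 ≤ w i := by
    intro i hi1 hi2
    rcases lt_or_eq_of_le hi2 with h | h
    · by_cases hc : 2 * i ≤ j
      · have := h1 i hi1 hc; omega
      · have := h2 i (by omega) h; omega
    · subst h; omega
  have ub : ∀ i, 1 ≤ i → i ≤ ℓ → w i ≤ q := by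
    intro i hi1 hi2
    rcases lt_trichotomy i j with h | h | h
    · by_cases hc : 2 * i ≤ j
      · exact (h1 i hi1 hc).2
      · exact (h2 i (by omega) h).2
    · subst h; omega
    · by_cases hc : 2 * i ≤ ℓ + j + 1
      · have := h3 i h hc; omega
      · have := h4 i (by omega) hi2; omega
  have ub' : ∀ i, j < i → i ≤ ℓ → w i ≤ q - 1 := by
    intro i hi1 hi2
    by_cases hc : 2 * i ≤ ℓ + j + 1
    · exact (h3 i hi1 hc).2
    · exact (h4 i (by omega) hi2).2
  refine ⟨⟨?_, ?_, ?_⟩, ?_, ?_⟩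
  · intro i hi1 hi2
    have := lb i hi1 hi2; omega
  · -- middle condition
    intro x y hx hy hxy
    have hus := ub (x + y) (by omega) hxy
    by_cases hs : x + y ≤ j
    · rcases le_total x y with h | h
      · have ha := h1 x hx (by omega)
        have hb := lbj y hy (by omega)
        omega
      · have ha := h1 y hy (by omega)
        have hb := lbj x hx (by omega)
        omega
    · have hus' := ub' (x + y) (by omega) hxy
      by_cases hc : 2 * x ≤ ℓ + j + 1
      · have ha := lb2 x hx hc (by omega)
        have hb := lb y hy (by omega)
        omega
      · have ha := lb2 y hy (by omega) (by omega)
        have hb := lb x hx (by omega)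
        omega
  · -- wrap condition
    intro x y hx hy hxl hyl hgt
    have hz1 : 1 ≤ x + y - ℓ - 1 := by omega
    have hz2 : x + y - ℓ - 1 ≤ ℓ := by omega
    have huz := ub (x + y - ℓ - 1) hz1 hz2
    by_cases hs : x + y - ℓ - 1 ≤ j
    · by_cases hc : 2 * x ≤ ℓ + j + 1
      · have ha := lb2 x hx hc hxl
        have hb := lb y hy hyl
        omega
      · have ha := lb2 y hy (by omega) hyl
        have hb := lb x hx hxl
        omega
    · have huz' := ub' (x + y - ℓ - 1) (by omega) hz2
      have ha := lb x hx hxl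
      have hb := lb y hy hyl
      omega
  · exact ub
  · intro i hi1 hi2 hqi
    by_contra h
    have := ub' i (by omega) hi2
    omega
end

section
/- Let f ≥ 3 be an integer and let j := f - 2 - 2ℓ, where ℓ satisfies (f-2)/3 ≤ ℓ ≤ (f-3)/2. The number of depth-3 numerical semigroups with Frobenius number f and multiplicity ℓ+1 equals 2^{ℓ-j} · N(j), where N(j) is the number of 3-Kunz words v_1⋯v_j (words with entries in {1,2,3} satisfying the Kunz conditions) with v_j = 3. For ℓ outside this range there are no such semigroups. -/
/-! ### Auxiliary definitions -/

def kwToSet (m : ℕ) (w : ℕ → ℕ) : Set ℕ := {n | w (n % m) ≤ n / m}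

noncomputable def kwOfSet (ℓ : ℕ) (S : Set ℕ) : ℕ → ℕ :=
  fun i => if 1 ≤ i ∧ i ≤ ℓ then sInf {t | t * (ℓ + 1) + i ∈ S} else 0

def GoodWord (ℓ j : ℕ) (w : ℕ → ℕ) : Prop :=
  IsKunzWord ℓ w ∧ (∀ i, 1 ≤ i → i ≤ ℓ → w i ≤ 3) ∧
  (∀ i, i = 0 ∨ ℓ < i → w i = 0) ∧ w j = 3 ∧ (∀ i, j < i → i ≤ ℓ → w i ≤ 2)

def GoodSet (f ℓ : ℕ) (S : Set ℕ) : Prop :=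
  IsNumericalSemigroup S ∧ sgFrobenius S = f ∧ sgMultiplicity S = ℓ + 1 ∧ sgDepth S = 3

lemma dm_mod (m t i : ℕ) (h : i < m) : (t * m + i) % m = i := by
  rw [Nat.add_comm, Nat.add_mul_mod_self_right, Nat.mod_eq_of_lt h]

lemma dm_div (m t i : ℕ) (h : i < m) : (t * m + i) / m = t := by
  rw [Nat.add_comm, Nat.add_mul_div_right _ _ (by omega : 0 < m), Nat.div_eq_of_lt h,
    Nat.zero_add]

/-! ### Basic facts about good sets -/

section sets
variable {f ℓ : ℕ} {S : Set ℕ}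

lemma goodset_exists_large (hS : GoodSet f ℓ S) : ∃ N, ∀ n, N < n → n ∈ S := by
  obtain ⟨⟨_, _, hfin⟩, _⟩ := hS
  obtain ⟨N, hN⟩ := hfin.bddAbove
  exact ⟨N, fun n hn => by_contra fun h => absurd (hN h) (by omega)⟩

lemma goodset_mem_mult (hS : GoodSet f ℓ S) : (ℓ + 1) ∈ S := by
  have h := hS.2.2.1
  have hne : {n | n ∈ S ∧ 0 < n}.Nonempty := by
    obtain ⟨N, hN⟩ := goodset_exists_large hS
    exact ⟨N + 1, hN _ (by omega), by omega⟩
  have := Nat.sInf_mem hne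
  rw [show sInf {n | n ∈ S ∧ 0 < n} = sgMultiplicity S from rfl, h] at this
  exact this.1

lemma goodset_small_not_mem (hS : GoodSet f ℓ S) {n : ℕ} (h1 : 0 < n) (h2 : n < ℓ + 1) :
    n ∉ S := by
  intro hn
  have h := hS.2.2.1
  have : sInf {n | n ∈ S ∧ 0 < n} ≤ n := Nat.sInf_le ⟨hn, h1⟩
  rw [show sInf {n | n ∈ S ∧ 0 < n} = sgMultiplicity S from rfl, h] at this
  omega

lemma goodset_cpl_nonempty (hS : GoodSet f ℓ S) (hf : 1 ≤ f) : Sᶜ.Nonempty := by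
  by_contra h
  rw [Set.not_nonempty_iff_eq_empty] at h
  have := hS.2.1
  rw [sgFrobenius, h] at this
  simp at this
  omega

lemma goodset_frob_not_mem (hS : GoodSet f ℓ S) (hf : 1 ≤ f) : f ∉ S := by
  have hne := goodset_cpl_nonempty hS hf
  have hb : BddAbove Sᶜ := hS.1.2.2.bddAbove
  have := Nat.sSup_mem hne hb
  rw [show sSup Sᶜ = sgFrobenius S from rfl, hS.2.1] at this
  exact this

lemma goodset_big_mem (hS : GoodSet f ℓ S) {n : ℕ} (h : f < n) : n ∈ S := by
  by_contra hn
  have hb : BddAbove Sᶜ := hS.1.2.2.bddAbove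
  have : n ≤ sSup Sᶜ := le_csSup hb hn
  rw [show sSup Sᶜ = sgFrobenius S from rfl, hS.2.1] at this
  omega

lemma goodset_add_mult (hS : GoodSet f ℓ S) {n : ℕ} (hn : n ∈ S) (k : ℕ) :
    n + k * (ℓ + 1) ∈ S := by
  induction k with
  | zero => simpa
  | succ k ih =>
    have := hS.1.2.1 _ ih _ (goodset_mem_mult hS)
    convert this using 1; ring

lemma goodset_mul_mem (hS : GoodSet f ℓ S) (k : ℕ) : k * (ℓ + 1) ∈ S := by
  have := goodset_add_mult hS hS.1.1 k
  simpa using this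

lemma goodset_range (hS : GoodSet f ℓ S) (hf : 3 ≤ f) : 2 * ℓ + 3 ≤ f ∧ f ≤ 3 * ℓ + 2 := by
  have hd := hS.2.2.2
  rw [sgDepth, hS.2.1, hS.2.2.1] at hd
  have hm : 0 < ℓ + 1 := by omega
  have h1 : 3 * (ℓ + 1) ≤ f + (ℓ + 1) := by
    rw [← Nat.le_div_iff_mul_le hm, hd]
  have h2 : f + (ℓ + 1) < 4 * (ℓ + 1) := by
    rw [← Nat.div_lt_iff_lt_mul hm, hd]; omega
  have hne : f ≠ 2 * (ℓ + 1) := by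
    intro h
    exact goodset_frob_not_mem hS (by omega) (h ▸ goodset_mul_mem hS 2)
  omega

/-- Membership characterization for elements written as `t * m + i`. -/
lemma goodset_mem_iff' (hS : GoodSet f ℓ S) (t i : ℕ) (h1 : 1 ≤ i) (h2 : i ≤ ℓ) :
    t * (ℓ + 1) + i ∈ S ↔ kwOfSet ℓ S i ≤ t := by
  rw [kwOfSet]
  rw [if_pos ⟨h1, h2⟩]
  set T := {t | t * (ℓ + 1) + i ∈ S} with hT
  have hTne : T.Nonempty := by
    obtain ⟨N, hN⟩ := goodset_exists_large hS
    exact ⟨N + 1, hN _ (by nlinarith)⟩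
  constructor
  · intro hn
    exact Nat.sInf_le hn
  · intro h
    have hmem : sInf T * (ℓ + 1) + i ∈ S := Nat.sInf_mem hTne
    have h3 := goodset_add_mult hS hmem (t - sInf T)
    have he : sInf T * (ℓ + 1) + (t - sInf T) * (ℓ + 1) = t * (ℓ + 1) := by
      rw [← Nat.add_mul]; congr 1; omega
    rwa [show sInf T * (ℓ + 1) + i + (t - sInf T) * (ℓ + 1) = t * (ℓ + 1) + i by omega] at h3

lemma goodset_mem_iff (hS : GoodSet f ℓ S) (n : ℕ) :
    n ∈ S ↔ kwOfSet ℓ S (n % (ℓ + 1)) ≤ n / (ℓ + 1) := by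
  set m := ℓ + 1 with hm
  have hd : n / m * m + n % m = n := Nat.div_add_mod' n m
  rcases Nat.eq_zero_or_pos (n % m) with h0 | hpos
  · rw [h0, kwOfSet]
    rw [if_neg (by omega)]
    simp only [Nat.zero_le, iff_true]
    have : n = n / m * m := by omega
    rw [this]
    exact goodset_mul_mem hS _
  · have hle : n % m ≤ ℓ := by have := Nat.mod_lt n (show 0 < m by omega); omega
    conv_lhs => rw [← hd]
    exact goodset_mem_iff' hS (n / m) (n % m) hpos hle

lemma goodset_word (hS : GoodSet f ℓ S) (hf : 3 ≤ f) :
    GoodWord ℓ (f - 2 - 2 * ℓ) (kwOfSet ℓ S) := by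
  obtain ⟨hr1, hr2⟩ := goodset_range hS hf
  set m := ℓ + 1 with hm
  set j := f - 2 - 2 * ℓ with hj
  have hj1 : 1 ≤ j := by omega
  have hjl : j ≤ ℓ := by omega
  set w := kwOfSet ℓ S with hw
  have key : ∀ t i, 1 ≤ i → i ≤ ℓ → (t * m + i ∈ S ↔ w i ≤ t) :=
    fun t i h1 h2 => goodset_mem_iff' hS t i h1 h2
  have hzero : ∀ i, i = 0 ∨ ℓ < i → w i = 0 := by
    intro i hi
    rw [hw, kwOfSet, if_neg (by omega)]
  have hpos : ∀ i, 1 ≤ i → i ≤ ℓ → 1 ≤ w i := by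
    intro i h1 h2
    by_contra h
    have : 0 * m + i ∈ S := by rw [key 0 i h1 h2]; omega
    rw [Nat.zero_mul, Nat.zero_add] at this
    exact goodset_small_not_mem hS (by omega) (by omega) this
  have hle3 : ∀ i, 1 ≤ i → i ≤ ℓ → w i ≤ 3 := by
    intro i h1 h2
    have h3 : 3 * m + i ∈ S := goodset_big_mem hS (by omega)
    rwa [key 3 i h1 h2] at h3
  have hwj : w j = 3 := by
    have hnot : ¬ (2 * m + j ∈ S) := by
      rw [show 2 * m + j = f by omega]
      exact goodset_frob_not_mem hS (by omega)
    rw [key 2 j hj1 hjl] at hnot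
    have := hle3 j hj1 hjl
    omega
  have hsuf : ∀ i, j < i → i ≤ ℓ → w i ≤ 2 := by
    intro i hji hil
    have h3 : 2 * m + i ∈ S := goodset_big_mem hS (by omega)
    rwa [key 2 i (by omega) hil] at h3
  refine ⟨⟨hpos, ?_, ?_⟩, hle3, hzero, hwj, hsuf⟩
  · -- condition 1
    intro i i' h1 h1' hsum
    -- (w i * m + i) + (w i' * m + i') ∈ S
    have ha : w i * m + i ∈ S := by rw [key _ i h1 (by omega)]
    have hb : w i' * m + i' ∈ S := by rw [key _ i' h1' (by omega)]
    have hc := hS.1.2.1 _ ha _ hb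
    have he : w i * m + i + (w i' * m + i') = (w i + w i') * m + (i + i') := by ring
    rw [he, key _ _ (by omega) hsum] at hc
    exact hc
  · -- condition 2
    intro i i' h1 h1' hil h2l hgt
    have ha : w i * m + i ∈ S := by rw [key _ i h1 hil]
    have hb : w i' * m + i' ∈ S := by rw [key _ i' h1' h2l]
    have hc := hS.1.2.1 _ ha _ hb
    have he : w i * m + i + (w i' * m + i') = (w i + w i' + 1) * m + (i + i' - ℓ - 1) := by
      have : (w i + w i' + 1) * m = w i * m + w i' * m + m := by ring
      omega
    rw [he, key _ _ (by omega) (by omega)] at hc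
    exact hc

end sets

/-! ### From words to sets -/

section words
variable {ℓ j : ℕ} {w : ℕ → ℕ}

lemma kwToSet_mem_iff (m : ℕ) (hm : 0 < m) (w : ℕ → ℕ) (t i : ℕ) (h : i < m) :
    t * m + i ∈ kwToSet m w ↔ w i ≤ t := by
  show w ((t * m + i) % m) ≤ (t * m + i) / m ↔ _
  rw [dm_mod m t i h, dm_div m t i h]

lemma kwToSet_good (hj1 : 1 ≤ j) (hjl : j ≤ ℓ) (hw : GoodWord ℓ j w) :
    GoodSet (2 * ℓ + 2 + j) ℓ (kwToSet (ℓ + 1) w) := by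
  obtain ⟨⟨hpos, hk1, hk2⟩, hle3, hzero, hwj, hsuf⟩ := hw
  set m := ℓ + 1 with hm
  have hmpos : 0 < m := by omega
  set S := kwToSet m w with hS
  have key : ∀ t i, i < m → (t * m + i ∈ S ↔ w i ≤ t) :=
    fun t i h => kwToSet_mem_iff m hmpos w t i h
  have hdec : ∀ n : ℕ, n ∈ S ↔ w (n % m) ≤ n / m := fun n => Iff.rfl
  have hmul : ∀ k : ℕ, k * m ∈ S := by
    intro k
    have := (key k 0 hmpos).2 (by rw [hzero 0 (Or.inl rfl)]; exact Nat.zero_le k)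
    simpa using this
  -- closure
  have hclosed : ∀ a ∈ S, ∀ b ∈ S, a + b ∈ S := by
    intro a ha b hb
    have hda : a / m * m + a % m = a := Nat.div_add_mod' a m
    have hdb : b / m * m + b % m = b := Nat.div_add_mod' b m
    set ta := a / m; set ia := a % m
    set tb := b / m; set ib := b % m
    have hia : ia < m := Nat.mod_lt a hmpos
    have hib : ib < m := Nat.mod_lt b hmpos
    have ha' : w ia ≤ ta := (hdec a).1 ha
    have hb' : w ib ≤ tb := (hdec b).1 hb
    rcases Nat.eq_zero_or_pos ia with h0 | hpa
    · -- a multiple of m contributes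
      have : a + b = (ta + tb) * m + ib := by
        have : (ta + tb) * m = ta * m + tb * m := by ring
        omega
      rw [this, key _ _ hib]
      have : w ia = 0 := hzero ia (Or.inl h0)
      omega
    rcases Nat.eq_zero_or_pos ib with h0 | hpb
    · have : a + b = (ta + tb) * m + ia := by
        have : (ta + tb) * m = ta * m + tb * m := by ring
        omega
      rw [this, key _ _ hia]
      have : w ib = 0 := hzero ib (Or.inl h0)
      omega
    rcases lt_trichotomy (ia + ib) m with hlt | heq | hgt
    · have : a + b = (ta + tb) * m + (ia + ib) := by
        have : (ta + tb) * m = ta * m + tb * m := by ring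
        omega
      rw [this, key _ _ (by omega)]
      calc w (ia + ib) ≤ w ia + w ib := hk1 ia ib hpa hpb (by omega)
        _ ≤ ta + tb := by omega
    · have : a + b = (ta + tb + 1) * m + 0 := by
        have : (ta + tb + 1) * m = ta * m + tb * m + m := by ring
        omega
      rw [this, key _ _ hmpos]
      rw [hzero 0 (Or.inl rfl)]
      exact Nat.zero_le _
    · have : a + b = (ta + tb + 1) * m + (ia + ib - m) := by
        have : (ta + tb + 1) * m = ta * m + tb * m + m := by ring
        omega
      rw [this, key _ _ (by omega)]
      calc w (ia + ib - m) = w (ia + ib - ℓ - 1) := by congr 1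
        _ ≤ w ia + w ib + 1 := hk2 ia ib hpa hpb (by omega) (by omega) (by omega)
        _ ≤ ta + tb + 1 := by omega
  have hzeromem : (0 : ℕ) ∈ S := by simpa using hmul 0
  -- cofinite
  have hcof : Sᶜ.Finite := by
    apply Set.Finite.subset (Set.finite_Iio (3 * m + m))
    intro n hn
    simp only [Set.mem_compl_iff] at hn
    by_contra hlt
    simp only [Set.mem_Iio, not_lt] at hlt
    apply hn
    rw [hdec]
    have h1 : 3 ≤ n / m := by
      have := Nat.div_le_div_right (c := m) hlt
      rw [show (3 * m + m) = 4 * m by ring] at this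
      rw [Nat.mul_div_cancel _ hmpos] at this
      omega
    have h2 : w (n % m) ≤ 3 := by
      rcases Nat.eq_zero_or_pos (n % m) with h0 | hp
      · rw [hzero _ (Or.inl h0)]; omega
      · exact hle3 _ hp (by have := Nat.mod_lt n hmpos; omega)
    omega
  have hns : IsNumericalSemigroup S := ⟨hzeromem, hclosed, hcof⟩
  -- small elements not in S
  have hsmall : ∀ n, 0 < n → n < m → n ∉ S := by
    intro n h1 h2 hn
    have : n = 0 * m + n := by omega
    rw [this, key _ _ h2] at hn
    have := hpos n h1 (by omega)
    omega
  -- f not in S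
  have hfval : 2 * ℓ + 2 + j = 2 * m + j := by omega
  have hfnot : (2 * ℓ + 2 + j) ∉ S := by
    rw [hfval, key _ _ (by omega), hwj]
    omega
  -- everything bigger is in S
  have hbig : ∀ n, 2 * ℓ + 2 + j < n → n ∈ S := by
    intro n hn
    obtain ⟨t, i, hi, rfl⟩ : ∃ t i, i < m ∧ n = t * m + i :=
      ⟨n / m, n % m, Nat.mod_lt n hmpos, (Nat.div_add_mod' n m).symm⟩
    rw [key _ _ hi]
    rcases Nat.eq_zero_or_pos i with h0 | hp
    · rw [hzero _ (Or.inl h0)]; omega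
    have hwi3 := hle3 i hp (by omega)
    rcases le_or_gt (w i) 2 with h2 | h3
    · have h1 : 1 * m < t * m := by
        have : 1 * m = m := by ring
        omega
      have : 1 < t := lt_of_mul_lt_mul_right h1 (Nat.zero_le m)
      omega
    · -- w i = 3, so i ≤ j
      have hij : i ≤ j := by
        by_contra hc
        have := hsuf i (by omega) (by omega)
        omega
      have h1 : 2 * m < t * m := by
        have : 2 * m = m + m := by ring
        omega
      have : 2 < t := lt_of_mul_lt_mul_right h1 (Nat.zero_le m)
      omega
  -- Frobenius
  have hfrob : sgFrobenius S = 2 * ℓ + 2 + j := by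
    rw [sgFrobenius]
    apply le_antisymm
    · refine csSup_le ⟨2 * ℓ + 2 + j, hfnot⟩ fun x hx => ?_
      by_contra hc
      exact hx (hbig x (by omega))
    · exact le_csSup hcof.bddAbove hfnot
  -- multiplicity
  have hmult : sgMultiplicity S = m := by
    rw [sgMultiplicity]
    apply le_antisymm
    · refine Nat.sInf_le ⟨?_, hmpos⟩
      simpa using hmul 1
    · refine le_csInf ⟨m, by simpa using hmul 1, hmpos⟩ ?_
      rintro x ⟨hx1, hx2⟩
      by_contra hc
      exact hsmall x hx2 (by omega) hx1
  -- depth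
  have hdepth : sgDepth S = 3 := by
    rw [sgDepth, hfrob, hmult]
    rw [show 2 * ℓ + 2 + j + m = j + 3 * m by omega]
    rw [Nat.add_mul_div_right _ _ hmpos, Nat.div_eq_of_lt (show j < m by omega)]
  exact ⟨hns, hfrob, hmult, hdepth⟩

end words

section roundtrip
variable {f ℓ j : ℕ} {w : ℕ → ℕ} {S : Set ℕ}

lemma kwOfSet_kwToSet (hj1 : 1 ≤ j) (hjl : j ≤ ℓ) (hw : GoodWord ℓ j w) :
    kwOfSet ℓ (kwToSet (ℓ + 1) w) = w := by
  obtain ⟨⟨hpos, hk1, hk2⟩, hle3, hzero, hwj, hsuf⟩ := hw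
  funext i
  by_cases hi : 1 ≤ i ∧ i ≤ ℓ
  · rw [kwOfSet, if_pos hi]
    have hmem : ∀ t, t * (ℓ + 1) + i ∈ kwToSet (ℓ + 1) w ↔ w i ≤ t :=
      fun t => kwToSet_mem_iff (ℓ + 1) (by omega) w t i (by omega)
    apply le_antisymm
    · exact Nat.sInf_le ((hmem (w i)).2 le_rfl)
    · have hne : {t | t * (ℓ + 1) + i ∈ kwToSet (ℓ + 1) w}.Nonempty :=
        ⟨w i, (hmem (w i)).2 le_rfl⟩
      have := Nat.sInf_mem hne
      exact (hmem _).1 this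
  · rw [kwOfSet, if_neg hi, hzero i (by omega)]

lemma kwToSet_kwOfSet (hS : GoodSet f ℓ S) : kwToSet (ℓ + 1) (kwOfSet ℓ S) = S := by
  ext n
  rw [show n ∈ kwToSet (ℓ + 1) (kwOfSet ℓ S) ↔
      kwOfSet ℓ S (n % (ℓ + 1)) ≤ n / (ℓ + 1) from Iff.rfl]
  exact (goodset_mem_iff hS n).symm

noncomputable def equivAB (f ℓ : ℕ) (hf : 3 ≤ f) (h1 : 2 * ℓ + 3 ≤ f) (h2 : f ≤ 3 * ℓ + 2) :
    {S : Set ℕ // GoodSet f ℓ S} ≃ {w : ℕ → ℕ // GoodWord ℓ (f - 2 - 2 * ℓ) w} where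
  toFun := fun S => ⟨kwOfSet ℓ S.1, goodset_word S.2 hf⟩
  invFun := fun w => ⟨kwToSet (ℓ + 1) w.1, by
    have := kwToSet_good (j := f - 2 - 2 * ℓ) (by omega) (by omega) w.2
    rwa [show 2 * ℓ + 2 + (f - 2 - 2 * ℓ) = f by omega] at this⟩
  left_inv := fun S => Subtype.ext (kwToSet_kwOfSet S.2)
  right_inv := fun w => Subtype.ext (kwOfSet_kwToSet (by omega) (by omega) w.2)

end roundtrip

section counting

def TailWord (j : ℕ) (v : ℕ → ℕ) : Prop :=
  IsKunzWord j v ∧ (∀ i, 1 ≤ i → i ≤ j → v i ≤ 3) ∧ v j = 3 ∧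
  (∀ i, i = 0 ∨ j < i → v i = 0)

def truncW (j : ℕ) (w : ℕ → ℕ) : ℕ → ℕ := fun i => if i ≤ j then w i else 0

def extW (ℓ j : ℕ) (g : Fin (ℓ - j) → Fin 2) (v : ℕ → ℕ) : ℕ → ℕ := fun i =>
  if i ≤ j then v i
  else if h : i ≤ ℓ ∧ j < i then (g ⟨i - j - 1, by omega⟩ : ℕ) + 1 else 0

variable {ℓ j : ℕ}

lemma truncW_tail {w : ℕ → ℕ} (hj1 : 1 ≤ j) (hjl : j ≤ ℓ) (hw : GoodWord ℓ j w) :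
    TailWord j (truncW j w) := by
  obtain ⟨⟨hpos, hk1, hk2⟩, hle3, hzero, hwj, hsuf⟩ := hw
  have hv : ∀ i, i ≤ j → truncW j w i = w i := fun i h => by rw [truncW, if_pos h]
  refine ⟨⟨fun i h1 h2 => ?_, fun i i' h1 h1' hs => ?_,
      fun i i' h1 h1' hil h2l hgt => ?_⟩, fun i h1 h2 => ?_, ?_, fun i hi => ?_⟩
  · rw [hv i h2]; exact hpos i h1 (by omega)
  · rw [hv _ hs, hv i (by omega), hv i' (by omega)]
    exact hk1 i i' h1 h1' (by omega)
  · rw [hv _ (by omega), hv i hil, hv i' h2l]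
    have h3 := hle3 (i + i' - j - 1) (by omega) (by omega)
    have p1 := hpos i h1 (by omega)
    have p2 := hpos i' h1' (by omega)
    omega
  · rw [hv i h2]; exact hle3 i h1 (by omega)
  · rw [hv j le_rfl]; exact hwj
  · rcases hi with h | h
    · rw [h, hv 0 (by omega)]; exact hzero 0 (Or.inl rfl)
    · rw [truncW, if_neg (by omega)]

lemma extW_good {g : Fin (ℓ - j) → Fin 2} {v : ℕ → ℕ} (hj1 : 1 ≤ j) (hjl : j ≤ ℓ)
    (hv : TailWord j v) : GoodWord ℓ j (extW ℓ j g v) := by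
  obtain ⟨⟨vpos, vk1, vk2⟩, vle3, vj, vzero⟩ := hv
  have hb : ∀ i, 1 ≤ i → i ≤ ℓ → 1 ≤ extW ℓ j g v i ∧ extW ℓ j g v i ≤ 3 := by
    intro i h1 h2
    rw [extW]
    split_ifs with ha hc
    · exact ⟨vpos i h1 ha, vle3 i h1 ha⟩
    · have := (g ⟨i - j - 1, by omega⟩).2
      omega
    · omega
  have hpre : ∀ i, i ≤ j → extW ℓ j g v i = v i := fun i h => by rw [extW]; simp [h]
  have hsuf2 : ∀ i, j < i → i ≤ ℓ → extW ℓ j g v i ≤ 2 := by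
    intro i hji hil
    rw [extW]
    rw [if_neg (by omega), dif_pos ⟨hil, hji⟩]
    have := (g ⟨i - j - 1, by omega⟩).2
    omega
  refine ⟨⟨fun i h1 h2 => (hb i h1 h2).1, fun i i' h1 h1' hs => ?_,
      fun i i' h1 h1' hil h2l hgt => ?_⟩, fun i h1 h2 => (hb i h1 h2).2, fun i hi => ?_,
      ?_, hsuf2⟩
  · by_cases hsj : i + i' ≤ j
    · rw [hpre _ hsj, hpre i (by omega), hpre i' (by omega)]
      exact vk1 i i' h1 h1' hsj
    · have hbi := (hb i h1 (by omega)).1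
      have hbi' := (hb i' h1' (by omega)).1
      have hbs := hsuf2 (i + i') (by omega) hs
      omega
  · have hbi := (hb i h1 hil).1
    have hbi' := (hb i' h1' h2l).1
    have hbt := (hb (i + i' - ℓ - 1) (by omega) (by omega)).2
    omega
  · rcases hi with h | h
    · rw [h, hpre 0 (by omega)]; exact vzero 0 (Or.inl rfl)
    · rw [extW, if_neg (by omega), dif_neg (by omega)]
  · rw [hpre j le_rfl]; exact vj

def equivBC (hj1 : 1 ≤ j) (hjl : j ≤ ℓ) :
    {w : ℕ → ℕ // GoodWord ℓ j w} ≃ (Fin (ℓ - j) → Fin 2) × {v : ℕ → ℕ // TailWord j v} where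
  toFun := fun w =>
    (fun k => ⟨w.1 (j + 1 + k) - 1, by
        obtain ⟨w, ⟨hpos, hk1, hk2⟩, hle3, hzero, hwj, hsuf⟩ := w
        have hk := k.2
        have h1 := hpos (j + 1 + k) (by omega) (by omega)
        have h2 := hsuf (j + 1 + k) (by omega) (by omega)
        simp only
        omega⟩,
     ⟨truncW j w.1, truncW_tail hj1 hjl w.2⟩)
  invFun := fun p => ⟨extW ℓ j p.1 p.2.1, extW_good hj1 hjl p.2.2⟩
  left_inv := by
    rintro ⟨w, hw⟩
    obtain ⟨⟨hpos, hk1, hk2⟩, hle3, hzero, hwj, hsuf⟩ := hw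
    apply Subtype.ext
    funext i
    show extW ℓ j _ (truncW j w) i = w i
    rw [extW]
    split_ifs with h1 h2
    · rw [truncW, if_pos h1]
    · have p1 := hpos i (by omega) h2.1
      have p2 := hsuf i h2.2 h2.1
      simp only
      have he : j + 1 + (i - j - 1) = i := by omega
      rw [he]
      omega
    · exact (hzero i (by omega)).symm
  right_inv := by
    rintro ⟨g, v, hv⟩
    obtain ⟨⟨vpos, vk1, vk2⟩, vle3, vj, vzero⟩ := hv
    refine Prod.ext ?_ ?_
    · funext k
      apply Fin.ext
      show extW ℓ j g v (j + 1 + (k : ℕ)) - 1 = ((g k : Fin 2) : ℕ)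
      have hk := k.2
      rw [extW, if_neg (by omega), dif_pos ⟨by omega, by omega⟩]
      have hfe : (⟨j + 1 + (k : ℕ) - j - 1, by omega⟩ : Fin (ℓ - j)) = k := by
        apply Fin.ext; simp only; omega
      rw [hfe]
      simp
    · apply Subtype.ext
      funext i
      show truncW j (extW ℓ j g v) i = v i
      rw [truncW]
      split_ifs with h
      · rw [extW, if_pos h]
      · exact (vzero i (by omega)).symm

end counting

/-- For `f ≥ 3` and `(f-2)/3 ≤ ℓ ≤ (f-3)/2`, with `j := f - 2 - 2ℓ`, the number of
depth-3 numerical semigroups with Frobenius number `f` and multiplicity `ℓ + 1`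
equals `2^{ℓ-j} · N(j)`, where `N(j)` is the number of 3-Kunz words of length `j`
ending in `3` (encoded as functions `ℕ → ℕ` vanishing outside `[1, j]`). For `ℓ`
outside this range there are no such semigroups. -/
theorem stmt15 (f ℓ : ℕ) (hf : 3 ≤ f) :
    (f ≤ 3 * ℓ + 2 → 2 * ℓ + 3 ≤ f →
      Nat.card {S : Set ℕ // IsNumericalSemigroup S ∧ sgFrobenius S = f ∧
        sgMultiplicity S = ℓ + 1 ∧ sgDepth S = 3} =
      2 ^ (ℓ - (f - 2 - 2 * ℓ)) *
        Nat.card {v : ℕ → ℕ // IsKunzWord (f - 2 - 2 * ℓ) v ∧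
          (∀ i, 1 ≤ i → i ≤ f - 2 - 2 * ℓ → v i ≤ 3) ∧
          v (f - 2 - 2 * ℓ) = 3 ∧
          (∀ i, i = 0 ∨ f - 2 - 2 * ℓ < i → v i = 0)}) ∧
    (¬(f ≤ 3 * ℓ + 2 ∧ 2 * ℓ + 3 ≤ f) →
      Nat.card {S : Set ℕ // IsNumericalSemigroup S ∧ sgFrobenius S = f ∧
        sgMultiplicity S = ℓ + 1 ∧ sgDepth S = 3} = 0) := by
  constructor
  · intro h2 h1
    have hj1 : 1 ≤ f - 2 - 2 * ℓ := by omega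
    have hjl : f - 2 - 2 * ℓ ≤ ℓ := by omega
    have e1 : Nat.card {S : Set ℕ // IsNumericalSemigroup S ∧ sgFrobenius S = f ∧
        sgMultiplicity S = ℓ + 1 ∧ sgDepth S = 3} =
        Nat.card {w : ℕ → ℕ // GoodWord ℓ (f - 2 - 2 * ℓ) w} :=
      Nat.card_congr (equivAB f ℓ hf h1 h2)
    have e2 : Nat.card {w : ℕ → ℕ // GoodWord ℓ (f - 2 - 2 * ℓ) w} =
        Nat.card ((Fin (ℓ - (f - 2 - 2 * ℓ)) → Fin 2) ×
          {v : ℕ → ℕ // TailWord (f - 2 - 2 * ℓ) v}) :=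
      Nat.card_congr (equivBC hj1 hjl)
    rw [e1, e2, Nat.card_prod]
    congr 1
    simp [Nat.card_eq_fintype_card]
  · intro h
    have hE : IsEmpty {S : Set ℕ // IsNumericalSemigroup S ∧ sgFrobenius S = f ∧
        sgMultiplicity S = ℓ + 1 ∧ sgDepth S = 3} := by
      refine ⟨fun S => ?_⟩
      have hr := goodset_range S.2 hf
      exact h ⟨hr.2, hr.1⟩
    exact Nat.card_of_isEmpty
end

section
/- If w_1⋯w_j is a Kunz word of length j with entries in {1,2,3} and w_j = 3, then for every i with 1 ≤ i ≤ ⌊(j-1)/2⌋, we have w_i + w_{j-i} ≥ 3; in particular, w_i and w_{j-i} are not both equal to 1. Consequently, the number of such words is at most 8^{(j-1)/2} when j is odd and at most 2·8^{(j-2)/2} when j is even. -/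
/-- If `w₁ ⋯ w_j` is a Kunz word with entries in `{1,2,3}` and `w j = 3`, then for
every `i` with `1 ≤ i ≤ ⌊(j-1)/2⌋` we have `w i + w (j-i) ≥ 3`; in particular
`w i` and `w (j-i)` are not both `1`. Consequently the number of such words is at
most `8^{(j-1)/2}` for odd `j` and at most `2 · 8^{(j-2)/2}` for even `j`.
(Words are encoded as functions `ℕ → ℕ` vanishing outside `[1, j]`.) -/
theorem stmt16 (j : ℕ) (hj : 1 ≤ j) :
    (∀ w : ℕ → ℕ, IsKunzWord j w → (∀ i, 1 ≤ i → i ≤ j → w i ≤ 3) → w j = 3 →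
      ∀ i, 1 ≤ i → 2 * i + 1 ≤ j →
        (3 ≤ w i + w (j - i) ∧ ¬(w i = 1 ∧ w (j - i) = 1))) ∧
    (Odd j → Nat.card {w : ℕ → ℕ // IsKunzWord j w ∧ (∀ i, 1 ≤ i → i ≤ j → w i ≤ 3) ∧
        w j = 3 ∧ (∀ i, i = 0 ∨ j < i → w i = 0)} ≤ 8 ^ ((j - 1) / 2)) ∧
    (Even j → Nat.card {w : ℕ → ℕ // IsKunzWord j w ∧ (∀ i, 1 ≤ i → i ≤ j → w i ≤ 3) ∧
        w j = 3 ∧ (∀ i, i = 0 ∨ j < i → w i = 0)} ≤ 2 * 8 ^ ((j - 2) / 2)) := by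
  have key : ∀ w : ℕ → ℕ, IsKunzWord j w → w j = 3 →
      ∀ i, 1 ≤ i → i < j → 3 ≤ w i + w (j - i) := by
    intro w hw h3 i hi hij
    have h2 := hw.2.1 i (j - i) hi (by omega) (by omega)
    have heq : i + (j - i) = j := by omega
    rw [heq, h3] at h2
    exact h2
  refine ⟨?_, ?_, ?_⟩
  · intro w hw hle h3 i hi hij
    have h := key w hw h3 i hi (by omega)
    exact ⟨h, by rintro ⟨ha, hb⟩; omega⟩
  · intro hodd
    obtain ⟨m, hm⟩ : ∃ m, j = 2 * m + 1 := by
      obtain ⟨k, hk⟩ := hodd; exact ⟨k, by omega⟩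
    have hm' : (j - 1) / 2 = m := by omega
    rw [hm']
    have hcard : Nat.card (Fin m → Fin 8) = 8 ^ m := by
      simp [Nat.card_eq_fintype_card]
    rw [← hcard]
    apply Nat.card_le_card_of_injective
      (f := fun (w : {w : ℕ → ℕ // IsKunzWord j w ∧ (∀ i, 1 ≤ i → i ≤ j → w i ≤ 3) ∧
        w j = 3 ∧ (∀ i, i = 0 ∨ j < i → w i = 0)}) =>
        fun i : Fin m => (⟨(3 * (w.1 (i.1 + 1) - 1) + (w.1 (j - (i.1 + 1)) - 1) - 1) % 8,
          Nat.mod_lt _ (by norm_num)⟩ : Fin 8))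
    rintro ⟨w, hw, hle, h3, h0⟩ ⟨w', hw', hle', h3', h0'⟩ hfe
    apply Subtype.ext
    simp only at hfe ⊢
    have hdec : ∀ k : ℕ, k < m → w (k + 1) = w' (k + 1) ∧ w (j - (k + 1)) = w' (j - (k + 1)) := by
      intro k hk
      have he := congrFun hfe ⟨k, hk⟩
      simp only [Fin.mk.injEq] at he
      have ha1 := hw.1 (k + 1) (by omega) (by omega)
      have ha2 := hle (k + 1) (by omega) (by omega)
      have hb1 := hw.1 (j - (k + 1)) (by omega) (by omega)
      have hb2 := hle (j - (k + 1)) (by omega) (by omega)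
      have hs := key w hw h3 (k + 1) (by omega) (by omega)
      have ha1' := hw'.1 (k + 1) (by omega) (by omega)
      have ha2' := hle' (k + 1) (by omega) (by omega)
      have hb1' := hw'.1 (j - (k + 1)) (by omega) (by omega)
      have hb2' := hle' (j - (k + 1)) (by omega) (by omega)
      have hs' := key w' hw' h3' (k + 1) (by omega) (by omega)
      rw [Nat.mod_eq_of_lt (by omega), Nat.mod_eq_of_lt (by omega)] at he
      omega
    funext n
    by_cases hn0 : n = 0 ∨ j < n
    · rw [h0 n hn0, h0' n hn0]
    · push_neg at hn0
      obtain ⟨hn1, hn2⟩ := hn0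
      by_cases hnj : n = j
      · rw [hnj, h3, h3']
      · by_cases hnm : n ≤ m
        · have := (hdec (n - 1) (by omega)).1
          have hr : n - 1 + 1 = n := by omega
          rwa [hr] at this
        · have := (hdec (j - n - 1) (by omega)).2
          have hr : j - ((j - n - 1) + 1) = n := by omega
          rwa [hr] at this
  · intro heven
    obtain ⟨m, hm⟩ : ∃ m, j = 2 * m + 2 := by
      obtain ⟨k, hk⟩ := heven; exact ⟨k - 1, by omega⟩
    have hm' : (j - 2) / 2 = m := by omega
    rw [hm']
    have hcard : Nat.card (Fin 2 × (Fin m → Fin 8)) = 2 * 8 ^ m := by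
      simp [Nat.card_eq_fintype_card]
    rw [← hcard]
    apply Nat.card_le_card_of_injective
      (f := fun (w : {w : ℕ → ℕ // IsKunzWord j w ∧ (∀ i, 1 ≤ i → i ≤ j → w i ≤ 3) ∧
        w j = 3 ∧ (∀ i, i = 0 ∨ j < i → w i = 0)}) =>
        ((⟨(w.1 (m + 1) - 2) % 2, Nat.mod_lt _ (by norm_num)⟩ : Fin 2),
         fun i : Fin m => (⟨(3 * (w.1 (i.1 + 1) - 1) + (w.1 (j - (i.1 + 1)) - 1) - 1) % 8,
          Nat.mod_lt _ (by norm_num)⟩ : Fin 8)))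
    rintro ⟨w, hw, hle, h3, h0⟩ ⟨w', hw', hle', h3', h0'⟩ hfe
    apply Subtype.ext
    simp only [Prod.mk.injEq] at hfe ⊢
    obtain ⟨hmid, hfe⟩ := hfe
    have hmideq : w (m + 1) = w' (m + 1) := by
      simp only [Fin.mk.injEq] at hmid
      have hs := key w hw h3 (m + 1) (by omega) (by omega)
      have hr : j - (m + 1) = m + 1 := by omega
      rw [hr] at hs
      have hs' := key w' hw' h3' (m + 1) (by omega) (by omega)
      rw [hr] at hs'
      have h1 := hle (m + 1) (by omega) (by omega)
      have h1' := hle' (m + 1) (by omega) (by omega)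
      omega
    have hdec : ∀ k : ℕ, k < m → w (k + 1) = w' (k + 1) ∧ w (j - (k + 1)) = w' (j - (k + 1)) := by
      intro k hk
      have he := congrFun hfe ⟨k, hk⟩
      simp only [Fin.mk.injEq] at he
      have ha1 := hw.1 (k + 1) (by omega) (by omega)
      have ha2 := hle (k + 1) (by omega) (by omega)
      have hb1 := hw.1 (j - (k + 1)) (by omega) (by omega)
      have hb2 := hle (j - (k + 1)) (by omega) (by omega)
      have hs := key w hw h3 (k + 1) (by omega) (by omega)
      have ha1' := hw'.1 (k + 1) (by omega) (by omega)
      have ha2' := hle' (k + 1) (by omega) (by omega)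
      have hb1' := hw'.1 (j - (k + 1)) (by omega) (by omega)
      have hb2' := hle' (j - (k + 1)) (by omega) (by omega)
      have hs' := key w' hw' h3' (k + 1) (by omega) (by omega)
      rw [Nat.mod_eq_of_lt (by omega), Nat.mod_eq_of_lt (by omega)] at he
      omega
    funext n
    by_cases hn0 : n = 0 ∨ j < n
    · rw [h0 n hn0, h0' n hn0]
    · push_neg at hn0
      obtain ⟨hn1, hn2⟩ := hn0
      by_cases hnj : n = j
      · rw [hnj, h3, h3']
      · by_cases hnmid : n = m + 1
        · rw [hnmid]; exact hmideq
        · by_cases hnm : n ≤ m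
          · have := (hdec (n - 1) (by omega)).1
            have hr : n - 1 + 1 = n := by omega
            rwa [hr] at this
          · have := (hdec (j - n - 1) (by omega)).2
            have hr : j - ((j - n - 1) + 1) = n := by omega
            rwa [hr] at this
end
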